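/- Let Λ be a trace-preserving positive linear map between complex matrix algebras and let ρ, σ be positive semidefinite with supp ρ ⊆ supp σ. Then supp Λ(ρ) ⊆ supp Λ(σ), Λ_σ maps the support projection π_σ of σ to the support projection π_{Λ(σ)} of Λ(σ) (in particular Λ_σ, restricted to operators supported on supp σ, is unital onto operators supported on supp Λ(σ)), and Λ_σ(d(ρ,σ)) = d(Λ(ρ),Λ(σ)). -/

import Mathlib

open Matrix Filter MeasureTheory
open scoped Topology Classical ComplexOrder

noncomputable section

/-- Functional calculus for Hermitian matrices (junk value `0` for non-Hermitian input). -/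
def matFun (f : ℝ → ℝ) {n : ℕ} (A : Matrix (Fin n) (Fin n) ℂ) : Matrix (Fin n) (Fin n) ℂ :=
  if h : A.IsHermitian then
    (h.eigenvectorUnitary : Matrix (Fin n) (Fin n) ℂ) *
      Matrix.diagonal (fun i => (f (h.eigenvalues i) : ℂ)) *
      star (h.eigenvectorUnitary : Matrix (Fin n) (Fin n) ℂ)
  else 0

/-- Square root of a positive semidefinite matrix. -/
def sqrtm {n : ℕ} (A : Matrix (Fin n) (Fin n) ℂ) : Matrix (Fin n) (Fin n) ℂ :=
  matFun Real.sqrt A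

/-- Square root of the Moore–Penrose inverse of a positive semidefinite matrix. -/
def pinvSqrt {n : ℕ} (A : Matrix (Fin n) (Fin n) ℂ) : Matrix (Fin n) (Fin n) ℂ :=
  matFun (fun x => (Real.sqrt x)⁻¹) A

/-- Moore–Penrose inverse of a positive semidefinite matrix. -/
def mpinv {n : ℕ} (A : Matrix (Fin n) (Fin n) ℂ) : Matrix (Fin n) (Fin n) ℂ :=
  matFun (fun x => x⁻¹) A

/-- Orthogonal projection onto the support of a positive semidefinite matrix. -/
def suppProj {n : ℕ} (A : Matrix (Fin n) (Fin n) ℂ) : Matrix (Fin n) (Fin n) ℂ :=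
  matFun (fun x => if x = 0 then 0 else 1) A

/-- Commutative Radon–Nikodym derivative `d(ρ,σ) = σ^{-1/2} ρ σ^{-1/2}`. -/
def dRN {n : ℕ} (ρ σ : Matrix (Fin n) (Fin n) ℂ) : Matrix (Fin n) (Fin n) ℂ :=
  pinvSqrt σ * ρ * pinvSqrt σ

/-- `supp ρ ⊆ supp σ`. -/
def suppLE {n : ℕ} (ρ σ : Matrix (Fin n) (Fin n) ℂ) : Prop :=
  LinearMap.range ρ.mulVecLin ≤ LinearMap.range σ.mulVecLin

/-- Loewner order `A ≤ B`. -/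
def LoewnerLE {n : ℕ} (A B : Matrix (Fin n) (Fin n) ℂ) : Prop :=
  (B - A).PosSemidef

/-- The convention `0 · f(γ/0) := lim_{ε↓0} ε f(γ/ε)` (as a limsup, so that it is
always defined; for convex `f` the limit exists and coincides with it). -/
def zeroMulConv (f : ℝ → EReal) (γ : ℝ) : EReal :=
  Filter.limsup (fun ε : ℝ => (ε : EReal) * f (γ / ε)) (𝓝[>] (0 : ℝ))

/-- Lift of a real valued function to `EReal` values. -/
def toE (f : ℝ → ℝ) : ℝ → EReal := fun y => ((f y : ℝ) : EReal)

/-- Classical `f`-divergence `D_f(p‖q) = ∑_x q(x) f(p(x)/q(x))`, with the convention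
`0 · f(γ/0) := lim_{ε↓0} ε f(γ/ε)`. -/
def DfFinset (f : ℝ → EReal) {α : Type*} (X : Finset α) (p q : α → ℝ) : EReal :=
  ∑ x ∈ X, if q x = 0 then zeroMulConv f (p x) else (q x : EReal) * f (p x / q x)

/-- A reverse test of `(ρ, σ)`: trace-one positive semidefinite matrices `Γ x`
and nonnegative weights `p, q` with `∑ p x • Γ x = ρ` and `∑ q x • Γ x = σ`. -/
def IsReverseTest {n k : ℕ} (ρ σ : Matrix (Fin n) (Fin n) ℂ)
    (Γ : Fin k → Matrix (Fin n) (Fin n) ℂ) (p q : Fin k → ℝ) : Prop :=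
  (∀ x, (Γ x).PosSemidef) ∧ (∀ x, (Γ x).trace = 1) ∧ (∀ x, 0 ≤ p x) ∧ (∀ x, 0 ≤ q x) ∧
    ∑ x, (p x : ℂ) • Γ x = ρ ∧ ∑ x, (q x : ℂ) • Γ x = σ

/-- Maximal `f`-divergence: infimum of `D_f(p‖q)` over all reverse tests of `(ρ,σ)`. -/
def DfMax (f : ℝ → EReal) {n : ℕ} (ρ σ : Matrix (Fin n) (Fin n) ℂ) : EReal :=
  ⨅ (k : ℕ) (Γ : Fin k → Matrix (Fin n) (Fin n) ℂ) (p : Fin k → ℝ) (q : Fin k → ℝ)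
    (_ : IsReverseTest ρ σ Γ p q), DfFinset f Finset.univ p q

/-- Condition (FC): `f` is a proper closed convex function on `[0,∞)` with values in
`ℝ ∪ {+∞}` and `f 0 = 0`. -/
structure IsFC (f : ℝ → EReal) : Prop where
  zero : f 0 = 0
  ne_bot : ∀ y : ℝ, 0 ≤ y → f y ≠ ⊥
  convex : ∀ ⦃y z : ℝ⦄, 0 ≤ y → 0 ≤ z → ∀ ⦃t : ℝ⦄, 0 ≤ t → t ≤ 1 →
    f (t * y + (1 - t) * z) ≤ (t : EReal) * f y + ((1 - t : ℝ) : EReal) * f z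
  lsc : LowerSemicontinuousOn f (Set.Ici 0)

/-- A density matrix: positive semidefinite with trace one. -/
def IsDensity {n : ℕ} (ρ : Matrix (Fin n) (Fin n) ℂ) : Prop :=
  ρ.PosSemidef ∧ ρ.trace = 1

/-- Trace preserving positive linear map. -/
def IsTPP {n m : ℕ} (Λ : Matrix (Fin n) (Fin n) ℂ →ₗ[ℂ] Matrix (Fin m) (Fin m) ℂ) : Prop :=
  (∀ A : Matrix (Fin n) (Fin n) ℂ, A.PosSemidef → (Λ A).PosSemidef) ∧
  (∀ A : Matrix (Fin n) (Fin n) ℂ, (Λ A).trace = A.trace)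

/-- CPTP map: trace preserving, and `Λ ⊗ id_k` is positive for every `k`. -/
def IsCPTP {n m : ℕ} (Λ : Matrix (Fin n) (Fin n) ℂ →ₗ[ℂ] Matrix (Fin m) (Fin m) ℂ) : Prop :=
  (∀ A : Matrix (Fin n) (Fin n) ℂ, (Λ A).trace = A.trace) ∧
  ∀ (k : ℕ) (M : Matrix (Fin n × Fin k) (Fin n × Fin k) ℂ), M.PosSemidef →
    (Matrix.of (fun i j : Fin m × Fin k =>
      Λ (Matrix.of fun r s => M (r, i.2) (s, j.2)) i.1 j.1)).PosSemidef

/-- The map `Λ_σ(Z) = Λ(σ)^{-1/2} Λ(σ^{1/2} Z σ^{1/2}) Λ(σ)^{-1/2}`. -/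
def lamSigma {n m : ℕ} (Λ : Matrix (Fin n) (Fin n) ℂ →ₗ[ℂ] Matrix (Fin m) (Fin m) ℂ)
    (σ Z : Matrix (Fin n) (Fin n) ℂ) : Matrix (Fin m) (Fin m) ℂ :=
  pinvSqrt (Λ σ) * Λ (sqrtm σ * Z * sqrtm σ) * pinvSqrt (Λ σ)

/-- Condition (F): `f : [0,∞) → ℝ` continuous, `f 0 = 0`, operator convex. -/
def IsOpConvexF (f : ℝ → ℝ) : Prop :=
  ContinuousOn f (Set.Ici 0) ∧ f 0 = 0 ∧
  ∀ (k : ℕ) (A B : Matrix (Fin k) (Fin k) ℂ), A.PosSemidef → B.PosSemidef →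
    ∀ t : ℝ, 0 ≤ t → t ≤ 1 →
      LoewnerLE (matFun f (t • A + (1 - t) • B)) (t • matFun f A + (1 - t) • matFun f B)

/-- The quantity `D'_f(ρ‖σ)`. -/
def DfPrime (f : ℝ → ℝ) {n : ℕ} (ρ σ : Matrix (Fin n) (Fin n) ℂ) : EReal :=
  if suppLE ρ σ then ((((σ * matFun f (dRN ρ σ)).trace.re : ℝ)) : EReal)
  else sInf { D : EReal | ∃ ρ₁ : Matrix (Fin n) (Fin n) ℂ,
    ρ₁.PosSemidef ∧ LoewnerLE ρ₁ ρ ∧ suppLE ρ₁ σ ∧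
    D = ((((σ * matFun f (dRN ρ₁ σ)).trace.re : ℝ)) : EReal)
        + zeroMulConv (toE f) (1 - ρ₁.trace.re) }

/-- Spectral projection of a Hermitian matrix onto the eigenvalue `c`. -/
def eigProj {n : ℕ} (A : Matrix (Fin n) (Fin n) ℂ) (c : ℝ) : Matrix (Fin n) (Fin n) ℂ :=
  matFun (fun x => if x = c then 1 else 0) A

/-- The (real) spectrum of a Hermitian matrix. -/
def matSpec {n : ℕ} (A : Matrix (Fin n) (Fin n) ℂ) : Set ℝ := {c | eigProj A c ≠ 0}

/-- weights `q` of the minimal reverse test (dominated case): `q(x) = tr[σ P_x]`. -/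
def mrtQ {n : ℕ} (ρ σ : Matrix (Fin n) (Fin n) ℂ) (c : ℝ) : ℝ :=
  ((σ * eigProj (dRN ρ σ) c).trace).re

/-- weights `p` of the minimal reverse test (dominated case): `p(x) = d_x q(x)`. -/
def mrtP {n : ℕ} (ρ σ : Matrix (Fin n) (Fin n) ℂ) (c : ℝ) : ℝ := c * mrtQ ρ σ c

/-- states of the minimal reverse test (dominated case): `Γ_x = σ^{1/2} P_x σ^{1/2} / q(x)`. -/
def mrtGamma {n : ℕ} (ρ σ : Matrix (Fin n) (Fin n) ℂ) (c : ℝ) : Matrix (Fin n) (Fin n) ℂ :=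
  (mrtQ ρ σ c)⁻¹ • (sqrtm σ * eigProj (dRN ρ σ) c * sqrtm σ)

/-- index set of the minimal reverse test (dominated case): the distinct eigenvalues of
`d(ρ,σ)` carrying positive weight. -/
def mrtX {n : ℕ} (ρ σ : Matrix (Fin n) (Fin n) ℂ) : Finset ℝ :=
  if h : (dRN ρ σ).IsHermitian then
    (Finset.univ.image h.eigenvalues).filter (fun c => mrtQ ρ σ c ≠ 0)
  else ∅

/-- `ρ̃ = ρ₁₁ − ρ₁₂ ρ₂₂⁻ ρ₂₁` (blocks w.r.t. the support projection of `σ`). -/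
def rhoTilde {n : ℕ} (ρ σ : Matrix (Fin n) (Fin n) ℂ) : Matrix (Fin n) (Fin n) ℂ :=
  suppProj σ * ρ * suppProj σ -
    (suppProj σ * ρ * (1 - suppProj σ)) *
      mpinv ((1 - suppProj σ) * ρ * (1 - suppProj σ)) *
        ((1 - suppProj σ) * ρ * suppProj σ)

/-- `ρ` itself if `supp ρ ⊆ supp σ`, and `ρ̃` otherwise. -/
def domPart {n : ℕ} (ρ σ : Matrix (Fin n) (Fin n) ℂ) : Matrix (Fin n) (Fin n) ℂ :=
  if suppLE ρ σ then ρ else rhoTilde ρ σ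

/-- Index set of the minimal reverse test of `(ρ,σ)` (general case); the extra point
`x₀` is encoded as `none`. -/
def mrtXO {n : ℕ} (ρ σ : Matrix (Fin n) (Fin n) ℂ) : Finset (Option ℝ) :=
  if suppLE ρ σ then (mrtX ρ σ).image some
  else insert none ((mrtX (rhoTilde ρ σ) σ).image some)

/-- weights `q` of the minimal reverse test (general case). -/
def mrtQO {n : ℕ} (ρ σ : Matrix (Fin n) (Fin n) ℂ) : Option ℝ → ℝ
  | none => 0
  | some c => mrtQ (domPart ρ σ) σ c

/-- weights `p` of the minimal reverse test (general case). -/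
def mrtPO {n : ℕ} (ρ σ : Matrix (Fin n) (Fin n) ℂ) : Option ℝ → ℝ
  | none => 1 - ((rhoTilde ρ σ).trace).re
  | some c => mrtP (domPart ρ σ) σ c

/-- states of the minimal reverse test (general case). -/
def mrtGammaO {n : ℕ} (ρ σ : Matrix (Fin n) (Fin n) ℂ) :
    Option ℝ → Matrix (Fin n) (Fin n) ℂ
  | none => ((1 - ((rhoTilde ρ σ).trace).re)⁻¹ : ℝ) • (ρ - rhoTilde ρ σ)
  | some c => mrtGamma (domPart ρ σ) σ c

/-- The recession slope `lim_{y→∞} f(y)/y` of a convex function (as a limsup). -/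
def recSlope (f : ℝ → ℝ) : EReal :=
  Filter.limsup (fun y : ℝ => ((f y / y : ℝ) : EReal)) atTop

/-- Support of a Borel measure on `ℝ`. -/
def measSupp (μ : Measure ℝ) : Set ℝ :=
  {t | ∀ ε : ℝ, 0 < ε → 0 < μ (Set.Ioo (t - ε) (t + ε))}

/-- Löwner representation of an operator convex function:
`f(y) = a y + b y² + ∫ (y/(1+t) − y/(y+t)) dμ(t)` with `b ≥ 0` and `μ` a nonnegative
Borel measure on `(0,∞)` with `∫ (1+t)⁻² dμ(t) < ∞`. -/
def IsLownerRep (f : ℝ → ℝ) (a b : ℝ) (μ : Measure ℝ) : Prop :=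
  0 ≤ b ∧ μ (Set.Iic 0) = 0 ∧ Integrable (fun t : ℝ => ((1 + t) ^ 2)⁻¹) μ ∧
    ∀ y : ℝ, 0 ≤ y → f y = a * y + b * y ^ 2 + ∫ t, (y / (1 + t) - y / (y + t)) ∂μ


section Aux

variable {n : ℕ} {A : Matrix (Fin n) (Fin n) ℂ}

lemma matFun_of (f : ℝ → ℝ) (hA : A.IsHermitian) :
    matFun f A = (hA.eigenvectorUnitary : Matrix (Fin n) (Fin n) ℂ) *
      Matrix.diagonal (fun i => (f (hA.eigenvalues i) : ℂ)) *
      star (hA.eigenvectorUnitary : Matrix (Fin n) (Fin n) ℂ) := dif_pos hA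

lemma matFun_isHermitian (f : ℝ → ℝ) (hA : A.IsHermitian) :
    (matFun f A).IsHermitian := by
  rw [matFun_of f hA, Matrix.star_eq_conjTranspose]
  apply Matrix.isHermitian_mul_mul_conjTranspose
  exact Matrix.isHermitian_diagonal_iff.mpr fun i => Complex.conj_ofReal _

lemma matFun_mul_matFun (f g : ℝ → ℝ) (hA : A.IsHermitian) :
    matFun f A * matFun g A = matFun (fun x => f x * g x) A := by
  have hU : star (hA.eigenvectorUnitary : Matrix (Fin n) (Fin n) ℂ) *
      (hA.eigenvectorUnitary : Matrix (Fin n) (Fin n) ℂ) = 1 :=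
    Matrix.mem_unitaryGroup_iff'.mp hA.eigenvectorUnitary.2
  have hcast : (fun i => (f (hA.eigenvalues i) : ℂ) * (g (hA.eigenvalues i) : ℂ)) =
      (fun i => ((f (hA.eigenvalues i) * g (hA.eigenvalues i) : ℝ) : ℂ)) := by
    funext i; push_cast; ring
  rw [matFun_of f hA, matFun_of g hA, matFun_of (fun x => f x * g x) hA]
  simp only [mul_assoc]
  rw [← mul_assoc (star (hA.eigenvectorUnitary : Matrix (Fin n) (Fin n) ℂ)), hU, one_mul,
    ← mul_assoc (Matrix.diagonal _), Matrix.diagonal_mul_diagonal, hcast]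

lemma matFun_congr {f g : ℝ → ℝ} (hA : A.IsHermitian)
    (h : ∀ i, f (hA.eigenvalues i) = g (hA.eigenvalues i)) :
    matFun f A = matFun g A := by
  have : (fun i => (f (hA.eigenvalues i) : ℂ)) = fun i => (g (hA.eigenvalues i) : ℂ) :=
    funext fun i => by rw [h i]
  rw [matFun_of f hA, matFun_of g hA, this]

lemma matFun_id (hA : A.IsHermitian) : matFun (fun x => x) A = A := by
  rw [matFun_of _ hA]
  exact hA.spectral_theorem.symm

lemma matFun_posSemidef {f : ℝ → ℝ} (hA : A.IsHermitian)
    (h : ∀ i, 0 ≤ f (hA.eigenvalues i)) : (matFun f A).PosSemidef := by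
  rw [matFun_of f hA, Matrix.star_eq_conjTranspose]
  refine Matrix.PosSemidef.mul_mul_conjTranspose_same ?_ _
  rw [Matrix.posSemidef_diagonal_iff]
  intro i
  exact_mod_cast Complex.zero_le_real.mpr (h i)

lemma matFun_sub_left (c : ℝ) (hA : A.IsHermitian) :
    matFun (fun x => c - x) A = (c : ℂ) • 1 - A := by
  have hU : (hA.eigenvectorUnitary : Matrix (Fin n) (Fin n) ℂ) *
      star (hA.eigenvectorUnitary : Matrix (Fin n) (Fin n) ℂ) = 1 :=
    Matrix.mem_unitaryGroup_iff.mp hA.eigenvectorUnitary.2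
  rw [matFun_of _ hA]
  have hcast : (fun i => ((c - hA.eigenvalues i : ℝ) : ℂ)) =
      (fun i => (c : ℂ) - ((hA.eigenvalues i : ℝ) : ℂ)) := by
    funext i; push_cast; ring
  have hd : (Matrix.diagonal (fun i => ((c - hA.eigenvalues i : ℝ) : ℂ))) =
      Matrix.diagonal (fun _ => (c : ℂ)) -
        Matrix.diagonal (fun i => ((hA.eigenvalues i : ℝ) : ℂ)) := by
    rw [hcast, Matrix.diagonal_sub]
  rw [hd, Matrix.mul_sub, Matrix.sub_mul, ← Matrix.smul_one_eq_diagonal (c : ℂ)]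
  have h1 : (hA.eigenvectorUnitary : Matrix (Fin n) (Fin n) ℂ) * ((c : ℂ) • 1) *
      star (hA.eigenvectorUnitary : Matrix (Fin n) (Fin n) ℂ) = (c : ℂ) • 1 := by
    rw [Matrix.mul_smul, mul_one, Matrix.smul_mul, hU]
  rw [h1]
  congr 1
  exact hA.spectral_theorem.symm

lemma posSemidef_neg_eq_zero {X : Matrix (Fin n) (Fin n) ℂ}
    (h1 : X.PosSemidef) (h2 : (-X).PosSemidef) : X = 0 := by
  have key : ∀ v : Fin n → ℂ, RCLike.re (dotProduct (star v) (X *ᵥ v)) = 0 := by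
    intro v
    have a1 := h1.re_dotProduct_nonneg v
    have a2 := h2.re_dotProduct_nonneg v
    rw [Matrix.neg_mulVec, dotProduct_neg, map_neg] at a2
    linarith
  have hev : ∀ i, h1.1.eigenvalues i = 0 := fun i => by
    rw [h1.1.eigenvalues_eq, key]
  have hdiag : (Matrix.diagonal (RCLike.ofReal ∘ h1.1.eigenvalues) :
      Matrix (Fin n) (Fin n) ℂ) = 0 := by
    rw [show RCLike.ofReal ∘ h1.1.eigenvalues = fun _ => (0 : ℂ) by
      funext i; simp [hev i]]
    simp
  rw [h1.1.spectral_theorem, hdiag, map_zero]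

lemma eq_of_mulVec_eq {M N : Matrix (Fin n) (Fin n) ℂ}
    (h : ∀ v, M *ᵥ v = N *ᵥ v) : M = N :=
  Matrix.toLin'.injective (LinearMap.ext fun v => by
    rw [Matrix.toLin'_apply, Matrix.toLin'_apply, h])

lemma suppProj_mul_self (hA : A.IsHermitian) : suppProj A * A = A := by
  nth_rewrite 2 [← matFun_id hA]
  rw [suppProj, matFun_mul_matFun _ _ hA]
  rw [matFun_congr hA (g := fun x => x) (fun i => by
    by_cases h : hA.eigenvalues i = 0 <;> simp [h])]
  exact matFun_id hA

lemma suppProj_mul_of_suppLE {ρ σ : Matrix (Fin n) (Fin n) ℂ}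
    (hσ : σ.IsHermitian) (hsupp : suppLE ρ σ) : suppProj σ * ρ = ρ := by
  apply eq_of_mulVec_eq
  intro v
  have hv : ρ *ᵥ v ∈ LinearMap.range σ.mulVecLin := hsupp ⟨v, rfl⟩
  obtain ⟨w, hw⟩ := hv
  rw [Matrix.mulVecLin_apply] at hw
  rw [← Matrix.mulVec_mulVec, ← hw, Matrix.mulVec_mulVec, suppProj_mul_self hσ]

lemma mul_suppProj_of_suppLE {ρ σ : Matrix (Fin n) (Fin n) ℂ}
    (hρ : ρ.IsHermitian) (hσ : σ.IsHermitian) (hsupp : suppLE ρ σ) :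
    ρ * suppProj σ = ρ := by
  have hπ : (suppProj σ).IsHermitian := matFun_isHermitian _ hσ
  have h := congrArg Matrix.conjTranspose (suppProj_mul_of_suppLE hσ hsupp)
  rwa [Matrix.conjTranspose_mul, hπ.eq, hρ.eq] at h

lemma sqrtm_mul_sqrtm (hA : A.PosSemidef) : sqrtm A * sqrtm A = A := by
  rw [sqrtm, matFun_mul_matFun _ _ hA.1,
    matFun_congr hA.1 (g := fun x => x)
      (fun i => Real.mul_self_sqrt (hA.eigenvalues_nonneg i)), matFun_id hA.1]

lemma sqrtm_mul_pinvSqrt (hA : A.PosSemidef) : sqrtm A * pinvSqrt A = suppProj A := by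
  rw [sqrtm, pinvSqrt, matFun_mul_matFun _ _ hA.1, suppProj]
  refine matFun_congr hA.1 (fun i => ?_)
  rcases eq_or_lt_of_le (hA.eigenvalues_nonneg i) with h | h
  · simp [← h]
  · have hs : Real.sqrt (hA.1.eigenvalues i) ≠ 0 := by positivity
    simp [mul_inv_cancel₀ hs, ne_of_gt h]

lemma pinvSqrt_mul_sqrtm (hA : A.PosSemidef) : pinvSqrt A * sqrtm A = suppProj A := by
  rw [sqrtm, pinvSqrt, matFun_mul_matFun _ _ hA.1, suppProj]
  refine matFun_congr hA.1 (fun i => ?_)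
  rcases eq_or_lt_of_le (hA.eigenvalues_nonneg i) with h | h
  · simp [← h]
  · have hs : Real.sqrt (hA.1.eigenvalues i) ≠ 0 := by positivity
    simp [inv_mul_cancel₀ hs, ne_of_gt h]

lemma pinvSqrt_mul_self_mul_pinvSqrt (hA : A.PosSemidef) :
    pinvSqrt A * A * pinvSqrt A = suppProj A := by
  nth_rewrite 2 [← matFun_id hA.1]
  rw [pinvSqrt, matFun_mul_matFun _ _ hA.1, matFun_mul_matFun _ _ hA.1, suppProj]
  refine matFun_congr hA.1 (fun i => ?_)
  rcases eq_or_lt_of_le (hA.eigenvalues_nonneg i) with h | h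
  · simp [← h]
  · have hs : Real.sqrt (hA.1.eigenvalues i) ≠ 0 := by positivity
    rw [if_neg (ne_of_gt h)]
    field_simp
    rw [Real.sq_sqrt (le_of_lt h)]

lemma sqrtm_mul_suppProj_mul_sqrtm (hA : A.PosSemidef) :
    sqrtm A * suppProj A * sqrtm A = A := by
  rw [sqrtm, suppProj, matFun_mul_matFun _ _ hA.1, matFun_mul_matFun _ _ hA.1]
  rw [matFun_congr hA.1 (g := fun x => x) (fun i => by
    rcases eq_or_lt_of_le (hA.eigenvalues_nonneg i) with h | h
    · simp [← h]
    · rw [if_neg (ne_of_gt h), mul_one, Real.mul_self_sqrt (le_of_lt h)])]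
  exact matFun_id hA.1

lemma self_mul_mpinv (hA : A.IsHermitian) : A * mpinv A = suppProj A := by
  nth_rewrite 1 [← matFun_id hA]
  rw [mpinv, matFun_mul_matFun _ _ hA, suppProj]
  exact matFun_congr hA (fun i => by
    by_cases h : hA.eigenvalues i = 0 <;> simp [h, mul_inv_cancel₀])

end Aux

/-- a trace preserving positive map preserves support domination, `Λ_σ`
maps the support projection of `σ` to that of `Λ(σ)`, and intertwines the commutative
Radon–Nikodym derivatives. -/
theorem stmt5 {n m : ℕ}
    (Λ : Matrix (Fin n) (Fin n) ℂ →ₗ[ℂ] Matrix (Fin m) (Fin m) ℂ) (hΛ : IsTPP Λ)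
    (ρ σ : Matrix (Fin n) (Fin n) ℂ) (hρ : ρ.PosSemidef) (hσ : σ.PosSemidef)
    (hsupp : suppLE ρ σ) :
    suppLE (Λ ρ) (Λ σ) ∧
    lamSigma Λ σ (suppProj σ) = suppProj (Λ σ) ∧
    lamSigma Λ σ (dRN ρ σ) = dRN (Λ ρ) (Λ σ) := by
  have hps : (pinvSqrt σ).IsHermitian := matFun_isHermitian _ hσ.1
  have hss : (sqrtm σ).IsHermitian := matFun_isHermitian _ hσ.1
  -- √σ d √σ = ρ
  have hπσ : sqrtm σ * dRN ρ σ * sqrtm σ = ρ := by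
    have h1 : sqrtm σ * dRN ρ σ * sqrtm σ =
        (sqrtm σ * pinvSqrt σ) * ρ * (pinvSqrt σ * sqrtm σ) := by
      simp only [dRN, mul_assoc]
    rw [h1, sqrtm_mul_pinvSqrt hσ, pinvSqrt_mul_sqrtm hσ,
      suppProj_mul_of_suppLE hσ.1 hsupp, mul_suppProj_of_suppLE hρ.1 hσ.1 hsupp]
  -- d is PSD
  have hd : (dRN ρ σ).PosSemidef := by
    have h := hρ.mul_mul_conjTranspose_same (pinvSqrt σ)
    rw [hps.eq] at h
    exact h
  set c : ℝ := ∑ i, hd.1.eigenvalues i with hc_def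
  have hc : ∀ i, hd.1.eigenvalues i ≤ c := fun i =>
    Finset.single_le_sum (fun j _ => hd.eigenvalues_nonneg j) (Finset.mem_univ i)
  have hY : (matFun (fun x => c - x) (dRN ρ σ)).PosSemidef :=
    matFun_posSemidef hd.1 (fun i => sub_nonneg.mpr (hc i))
  have hYeq : matFun (fun x => c - x) (dRN ρ σ) = (c : ℂ) • 1 - dRN ρ σ :=
    matFun_sub_left c hd.1
  have hX : ((c : ℂ) • σ - ρ).PosSemidef := by
    have h := hY.mul_mul_conjTranspose_same (sqrtm σ)
    rw [hss.eq, hYeq, Matrix.mul_sub (sqrtm σ) ((c : ℂ) • 1) (dRN ρ σ),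
      Matrix.mul_smul, mul_one,
      Matrix.sub_mul (((c : ℂ) • sqrtm σ)) (sqrtm σ * dRN ρ σ) (sqrtm σ),
      Matrix.smul_mul, sqrtm_mul_sqrtm hσ, hπσ] at h
    exact h
  have hLX : ((c : ℂ) • Λ σ - Λ ρ).PosSemidef := by
    have h := hΛ.1 _ hX
    rwa [map_sub, _root_.map_smul] at h
  have hσ' : (Λ σ).PosSemidef := hΛ.1 σ hσ
  have hρ' : (Λ ρ).PosSemidef := hΛ.1 ρ hρ
  have hπ'h : (suppProj (Λ σ)).IsHermitian := matFun_isHermitian _ hσ'.1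
  have hQh : (1 - suppProj (Λ σ)).IsHermitian := Matrix.isHermitian_one.sub hπ'h
  have hQσ : (1 - suppProj (Λ σ)) * Λ σ = 0 := by
    rw [Matrix.sub_mul 1 (suppProj (Λ σ)) (Λ σ), one_mul, suppProj_mul_self hσ'.1, sub_self]
  have hQρQ : (1 - suppProj (Λ σ)) * Λ ρ * (1 - suppProj (Λ σ)) = 0 := by
    have P1 := hLX.mul_mul_conjTranspose_same (1 - suppProj (Λ σ))
    rw [hQh.eq] at P1
    have e1 : (1 - suppProj (Λ σ)) * ((c : ℂ) • Λ σ - Λ ρ) * (1 - suppProj (Λ σ)) =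
        -((1 - suppProj (Λ σ)) * Λ ρ * (1 - suppProj (Λ σ))) := by
      rw [Matrix.mul_sub (1 - suppProj (Λ σ)) ((c : ℂ) • Λ σ) (Λ ρ),
        Matrix.mul_smul, hQσ, smul_zero, zero_sub, Matrix.neg_mul]
    rw [e1] at P1
    have P2 := hρ'.mul_mul_conjTranspose_same (1 - suppProj (Λ σ))
    rw [hQh.eq] at P2
    exact posSemidef_neg_eq_zero P2 P1
  have hρQ : Λ ρ * (1 - suppProj (Λ σ)) = 0 := by
    have hTh : (sqrtm (Λ ρ)).IsHermitian := matFun_isHermitian _ hρ'.1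
    have hTT : sqrtm (Λ ρ) * sqrtm (Λ ρ) = Λ ρ := sqrtm_mul_sqrtm hρ'
    have h0 : (sqrtm (Λ ρ) * (1 - suppProj (Λ σ)))ᴴ *
        (sqrtm (Λ ρ) * (1 - suppProj (Λ σ))) = 0 := by
      rw [Matrix.conjTranspose_mul, hQh.eq, hTh.eq]
      calc (1 - suppProj (Λ σ)) * sqrtm (Λ ρ) * (sqrtm (Λ ρ) * (1 - suppProj (Λ σ)))
          = (1 - suppProj (Λ σ)) * (sqrtm (Λ ρ) * sqrtm (Λ ρ)) * (1 - suppProj (Λ σ)) := by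
            simp only [mul_assoc]
        _ = 0 := by rw [hTT, hQρQ]
    have hTQ : sqrtm (Λ ρ) * (1 - suppProj (Λ σ)) = 0 :=
      Matrix.conjTranspose_mul_self_eq_zero.mp h0
    calc Λ ρ * (1 - suppProj (Λ σ)) = sqrtm (Λ ρ) * (sqrtm (Λ ρ) * (1 - suppProj (Λ σ))) := by
          rw [← mul_assoc, hTT]
      _ = 0 := by rw [hTQ, Matrix.mul_zero]
  have hρπ' : Λ ρ * suppProj (Λ σ) = Λ ρ := by
    have h := hρQ
    rw [Matrix.mul_sub (Λ ρ) 1 (suppProj (Λ σ)), mul_one, sub_eq_zero] at h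
    exact h.symm
  have hπρ' : suppProj (Λ σ) * Λ ρ = Λ ρ := by
    have h2 := congrArg Matrix.conjTranspose hρπ'
    rwa [Matrix.conjTranspose_mul, hπ'h.eq, hρ'.1.eq] at h2
  refine ⟨?_, ?_, ?_⟩
  · rintro x ⟨v, rfl⟩
    refine ⟨(mpinv (Λ σ) * Λ ρ) *ᵥ v, ?_⟩
    rw [Matrix.mulVecLin_apply, Matrix.mulVecLin_apply, Matrix.mulVec_mulVec,
      ← mul_assoc, self_mul_mpinv hσ'.1, hπρ']
  · rw [lamSigma, sqrtm_mul_suppProj_mul_sqrtm hσ,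
      pinvSqrt_mul_self_mul_pinvSqrt hσ']
  · rw [lamSigma, hπσ, dRN]

end
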